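/- arXiv:1606.08900 — 5 statements merged into one kernel-verified Lean document; each statement's English description precedes it below -/
import Mathlib

section
/- Let k be a field and Z a commutative k-algebra which possesses a k-basis (e_i)_{i∈I}, indexed by a finite set I, consisting of pairwise orthogonal idempotents summing to 1 (i.e., e_i·e_j = 0 for i ≠ j, e_i·e_i = e_i, and Σ_{i∈I} e_i = 1). Let z = Σ_{i∈I} a_i·e_i with a_i ∈ k. Then the k-subalgebra of Z generated by z (i.e., Algebra.adjoin k {z}) is all of Z if and only if the map i ↦ a_i is injective (z has simple spectrum). -/
/-!
Reading off coordinates in a basis of complete orthogonal idempotents is an isomorphism of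
`k`-algebras `Z ≃ₐ[k] (I → k)` carrying `z` to its spectrum `a`, so it suffices to decide when
`a` generates the product algebra `I → k`. If `a` is injective, every `f : I → k` is `p(a)` for
the Lagrange interpolation polynomial `p` of `f` at the nodes `a i`. If `a i = a j` with `i ≠ j`,
the subalgebra generated by `a` lies in the equalizer of the evaluations at `i` and `j`, which
misses `Pi.single i 1`.
-/
open Polynomial

section OrthogonalIdempotents

variable {k Z I : Type*} [CommSemiring k] [Semiring Z] [Algebra k Z] [Fintype I] {e : I → Z}

theorem OrthogonalIdempotents.sum_smul_mul_sum_smul (he : OrthogonalIdempotents e)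
    (c d : I → k) : (∑ i, c i • e i) * (∑ i, d i • e i) = ∑ i, (c i * d i) • e i := by
  classical
  simp only [Finset.sum_mul_sum, smul_mul_smul_comm, he.mul_eq, smul_ite, smul_zero,
    Finset.sum_ite_eq, Finset.mem_univ, if_true]

end OrthogonalIdempotents

namespace Module.Basis

variable {k Z I : Type*} [CommSemiring k] [Semiring Z] [Algebra k Z] [Fintype I]
  (b : Basis I k Z) (hb : CompleteOrthogonalIdempotents ⇑b)

include hb in
theorem equivFun_one : b.equivFun 1 = 1 := by
  classical
  rw [← hb.complete, map_sum]
  ext j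
  simp [Finset.sum_apply]

include hb in
theorem equivFun_mul (x y : Z) : b.equivFun (x * y) = b.equivFun x * b.equivFun y := by
  conv_lhs => rw [← b.sum_equivFun x, ← b.sum_equivFun y,
    hb.toOrthogonalIdempotents.sum_smul_mul_sum_smul, ← b.equivFun_symm_apply]
  exact b.equivFun.apply_symm_apply _

noncomputable def algEquivFun : Z ≃ₐ[k] (I → k) :=
  .ofLinearEquiv b.equivFun (b.equivFun_one hb) (b.equivFun_mul hb)

@[simp]
theorem algEquivFun_apply (x : Z) : b.algEquivFun hb x = b.equivFun x := rfl

end Module.Basis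

theorem AlgEquiv.adjoin_singleton_eq_top_iff {R A B : Type*} [CommSemiring R] [Semiring A]
    [Semiring B] [Algebra R A] [Algebra R B] (φ : A ≃ₐ[R] B) (x : A) :
    Algebra.adjoin R {φ x} = ⊤ ↔ Algebra.adjoin R {x} = ⊤ := by
  have hmap : Algebra.adjoin R {φ x} = (Algebra.adjoin R {x}).map (φ : A →ₐ[R] B) := by
    rw [AlgHom.map_adjoin, Set.image_singleton, AlgEquiv.coe_toAlgHom]
  have htop : (⊤ : Subalgebra R B) = (⊤ : Subalgebra R A).map (φ : A →ₐ[R] B) := by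
    rw [Algebra.map_top, (AlgHom.range_eq_top _).2 φ.surjective]
  rw [hmap, htop, (Subalgebra.map_injective φ.injective).eq_iff]

namespace Pi

theorem injective_of_adjoin_singleton_eq_top {k I : Type*} [CommSemiring k] [Nontrivial k]
    {a : I → k} (ha : Algebra.adjoin k {a} = ⊤) : Function.Injective a := by
  classical
  intro i j hij
  by_contra hne
  have hle : Algebra.adjoin k {a} ≤ (evalAlgHom k (fun _ => k) i).equalizer (evalAlgHom k _ j) :=
    Algebra.adjoin_le (Set.singleton_subset_iff.2 hij)
  have hsingle := hle (ha ▸ Algebra.mem_top : Pi.single i (1 : k) ∈ Algebra.adjoin k {a})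
  simp [AlgHom.mem_equalizer, Ne.symm hne] at hsingle

theorem adjoin_singleton_eq_top_of_injective {k I : Type*} [Field k] [Finite I]
    {a : I → k} (ha : Function.Injective a) : Algebra.adjoin k {a} = ⊤ := by
  classical
  cases nonempty_fintype I
  refine eq_top_iff.2 fun f _ => ?_
  rw [Algebra.adjoin_singleton_eq_range_aeval]
  refine ⟨Lagrange.interpolate Finset.univ a f, funext fun i => ?_⟩
  change aeval a _ i = f i
  rw [aeval_pi_apply₂, coe_aeval_eq_eval]
  exact Lagrange.eval_interpolate_at_node _ ha.injOn (Finset.mem_univ i)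

theorem adjoin_singleton_eq_top_iff {k I : Type*} [Field k] [Finite I] {a : I → k} :
    Algebra.adjoin k {a} = ⊤ ↔ Function.Injective a :=
  ⟨injective_of_adjoin_singleton_eq_top, adjoin_singleton_eq_top_of_injective⟩

end Pi

/-- If a commutative `k`-algebra `Z` has a finite `k`-basis `(e i)`
consisting of pairwise orthogonal idempotents summing to `1`, and `z = ∑ aᵢ • eᵢ`,
then `z` generates `Z` as a `k`-algebra iff the spectrum `i ↦ aᵢ` is simple
(i.e. `a` is injective). -/
theorem stmt_1 {k : Type*} [Field k] {Z : Type*} [CommRing Z] [Algebra k Z]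
    {I : Type*} [Fintype I] (e : Module.Basis I k Z)
    (horth : ∀ i j : I, i ≠ j → e i * e j = 0)
    (hidem : ∀ i : I, e i * e i = e i)
    (hsum : ∑ i : I, e i = 1)
    (a : I → k) (z : Z) (hz : z = ∑ i : I, a i • e i) :
    Algebra.adjoin k {z} = ⊤ ↔ Function.Injective a := by
  have he : CompleteOrthogonalIdempotents ⇑e := ⟨⟨hidem, fun i j hij => horth i j hij⟩, hsum⟩
  have hza : e.algEquivFun he z = a := by
    rw [e.algEquivFun_apply, hz, ← e.equivFun_symm_apply, LinearEquiv.apply_symm_apply]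
  rw [← (e.algEquivFun he).adjoin_singleton_eq_top_iff, hza, Pi.adjoin_singleton_eq_top_iff]
end

section
/- Let k be a field, X a commutative k-algebra, and (e_T)_{T∈I} a k-basis of X, indexed by a finite set I, consisting of pairwise orthogonal idempotents summing to 1. Let J_1, …, J_n ∈ X be elements given by J_k = Σ_{T∈I} c_T(k)·e_T with scalars c_T(k) ∈ k. Then the following are equivalent: (a) the map T ↦ (c_T(1), …, c_T(n)) ∈ k^n is injective; (b) the k-subalgebra of X generated by {J_1, …, J_n} is all of X. -/
/-!
Reading off coordinates in the basis `e` is an algebra isomorphism `X ≃ₐ[k] (I → k)`, since the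
`e T` multiply like the indicator functions of points. It carries `J m` to the function
`T ↦ c T m`, so the statement becomes: functions `f₁, …, fₙ` on a finite set generate the algebra
of all `k`-valued functions iff they separate points. If they do, the indicator of `T` is a product
over `S ≠ T` of suitable affine combinations `(f_m - f_m(S)) / (f_m(T) - f_m(S))`; if they do not
separate `T` from `S`, neither does anything in the algebra they generate.
-/

open Function

theorem Subalgebra.map_algEquiv_eq_top_iff {R A B : Type*} [CommSemiring R] [Semiring A]
    [Semiring B] [Algebra R A] [Algebra R B] (φ : A ≃ₐ[R] B) {S : Subalgebra R A} :
    S.map (φ : A →ₐ[R] B) = ⊤ ↔ S = ⊤ := by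
  rw [← (Subalgebra.map_injective (f := (φ : A →ₐ[R] B)) φ.injective).eq_iff, Algebra.map_top,
    (AlgHom.range_eq_top _).2 φ.surjective]

namespace Module.Basis

variable {k X I : Type*} [CommSemiring k] [Semiring X] [Algebra k X] [Fintype I]
  (e : Basis I k X)

theorem equivFun_one_of_sum_eq_one (hsum : ∑ T, e T = 1) : e.equivFun 1 = 1 := by
  classical
  simp [← hsum, Finsupp.single_eq_pi_single, Finset.univ_sum_single]
  rfl

theorem equivFun_mul_of_orthogonal_idempotent (horth : ∀ T S, T ≠ S → e T * e S = 0)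
    (hidem : ∀ T, e T * e T = e T) (x y : X) :
    e.equivFun (x * y) = e.equivFun x * e.equivFun y := by
  classical
  suffices (LinearMap.mul k X).compr₂ (e.equivFun : X →ₗ[k] I → k) =
      (LinearMap.mul k (I → k)).compl₁₂ (e.equivFun : X →ₗ[k] I → k) e.equivFun from
    LinearMap.congr_fun₂ this x y
  refine e.ext fun T => e.ext fun S => ?_
  obtain rfl | hTS := eq_or_ne T S
  · simp [hidem, Finsupp.single_eq_pi_single, ← Pi.single_mul]
  · simp [horth T S hTS, Finsupp.single_eq_pi_single, ← Pi.single_mul_left,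
      Pi.single_eq_of_ne hTS]

noncomputable def algEquivFunOfOrthogonalIdempotents (horth : ∀ T S, T ≠ S → e T * e S = 0)
    (hidem : ∀ T, e T * e T = e T) (hsum : ∑ T, e T = 1) : X ≃ₐ[k] (I → k) :=
  AlgEquiv.ofLinearEquiv e.equivFun (e.equivFun_one_of_sum_eq_one hsum)
    (e.equivFun_mul_of_orthogonal_idempotent horth hidem)

@[simp]
theorem algEquivFunOfOrthogonalIdempotents_apply (horth : ∀ T S, T ≠ S → e T * e S = 0)
    (hidem : ∀ T, e T * e T = e T) (hsum : ∑ T, e T = 1) (x : X) :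
    e.algEquivFunOfOrthogonalIdempotents horth hidem hsum x = e.equivFun x :=
  rfl

end Module.Basis

section SeparatingFunctions

variable {k I ι : Type*} [Field k]

theorem exists_mem_adjoin_range_swap_apply_eq_one_apply_eq_zero (c : I → ι → k) {T S : I}
    (h : c T ≠ c S) :
    ∃ g ∈ Algebra.adjoin k (Set.range (swap c)), g T = 1 ∧ g S = 0 := by
  obtain ⟨m, hm⟩ := Function.ne_iff.1 h
  refine ⟨(c T m - c S m)⁻¹ • (swap c m - algebraMap k _ (c S m)), ?_, ?_, ?_⟩
  · exact Subalgebra.smul_mem _ (sub_mem (Algebra.subset_adjoin (Set.mem_range_self m))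
      (Subalgebra.algebraMap_mem _ _)) _
  · simp [inv_mul_cancel₀ (sub_ne_zero.2 hm)]
  · simp

variable [Fintype I]

theorem Pi.single_one_mem_adjoin_range_swap [DecidableEq I] {c : I → ι → k} (hc : Injective c)
    (T : I) : Pi.single T 1 ∈ Algebra.adjoin k (Set.range (swap c)) := by
  have hsep : ∀ S, ∃ g ∈ Algebra.adjoin k (Set.range (swap c)), g T = 1 ∧ (S ≠ T → g S = 0) := by
    intro S
    obtain rfl | hST := eq_or_ne S T
    · exact ⟨1, one_mem _, rfl, fun h => (h rfl).elim⟩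
    · obtain ⟨g, hg, hgT, hgS⟩ :=
        exists_mem_adjoin_range_swap_apply_eq_one_apply_eq_zero c (hc.ne hST.symm)
      exact ⟨g, hg, hgT, fun _ => hgS⟩
  choose g hg hgT hgS using hsep
  have hprod : Pi.single T 1 = ∏ S, g S := by
    ext U
    rw [Finset.prod_apply]
    obtain rfl | hUT := eq_or_ne U T
    · simp [hgT]
    · exact (Pi.single_eq_of_ne hUT _).trans
        (Finset.prod_eq_zero (f := fun S => g S U) (Finset.mem_univ U) (hgS U hUT)).symm
  exact hprod ▸ prod_mem fun S _ => hg S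

theorem adjoin_range_swap_eq_top_iff (c : I → ι → k) :
    Algebra.adjoin k (Set.range (swap c)) = ⊤ ↔ Injective c := by
  classical
  refine ⟨fun h T S hTS => ?_, fun hc => eq_top_iff.2 fun f _ => ?_⟩
  · have hev : Pi.evalAlgHom k (fun _ => k) T = Pi.evalAlgHom k (fun _ => k) S :=
      AlgHom.ext_of_adjoin_eq_top h <| by rintro _ ⟨m, rfl⟩; exact congr_fun hTS m
    by_contra hne
    simpa [hne] using congr($hev (Pi.single T 1))
  · rw [← Finset.univ_sum_single f]
    refine sum_mem fun T _ => ?_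
    have : Pi.single T (f T) = f T • Pi.single T (1 : k) := by
      rw [← Pi.single_smul', smul_eq_mul, mul_one]
    exact this ▸ Subalgebra.smul_mem _ (Pi.single_one_mem_adjoin_range_swap hc T) _

end SeparatingFunctions

/-- Let `X` be a commutative `k`-algebra with a finite `k`-basis `(e T)`
of pairwise orthogonal idempotents summing to `1`, and let `J 1, …, J n ∈ X` with
`J m = ∑ T, c T m • e T`. Then the content map `T ↦ (c T 1, …, c T n)` is injective
iff `J 1, …, J n` generate `X` as a `k`-algebra. -/
theorem stmt_5 {k : Type*} [Field k] {X : Type*} [CommRing X] [Algebra k X]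
    {I : Type*} [Fintype I] (e : Module.Basis I k X)
    (horth : ∀ T S : I, T ≠ S → e T * e S = 0)
    (hidem : ∀ T : I, e T * e T = e T)
    (hsum : ∑ T : I, e T = 1)
    (n : ℕ) (J : Fin n → X) (c : I → Fin n → k)
    (hJ : ∀ m : Fin n, J m = ∑ T : I, c T m • e T) :
    Function.Injective c ↔ Algebra.adjoin k (Set.range J) = ⊤ := by
  classical
  set φ := e.algEquivFunOfOrthogonalIdempotents horth hidem hsum
  have hφJ : (φ : X →ₐ[k] I → k) ∘ J = swap c := by
    funext m U
    simp [φ, hJ, Finsupp.single_apply]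
  rw [← adjoin_range_swap_eq_top_iff, ← hφJ, Set.range_comp, Algebra.adjoin_image,
    Subalgebra.map_algEquiv_eq_top_iff]
end

section
/- Let k be a field, X a commutative k-algebra, and (e_T)_{T∈I} a finite family of pairwise orthogonal idempotents in X summing to 1. Let β : I → I' be a map into a set I', and for S ∈ I' set f_S = Σ_{T∈I, β(T)=S} e_T. Let J ∈ X and c : I → k satisfy J·e_T = c(T)·e_T for all T ∈ I, and assume that c(T) ≠ c(T') whenever T ≠ T' and β(T) = β(T'). Then for every T ∈ I, e_T = f_{β(T)} · Π_{T'∈I, T'≠T, β(T')=β(T)} (c(T) − c(T'))⁻¹·(J − c(T')·1). -/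
/-!
The product `∏ (c T - c T')⁻¹ • (J - c T' • 1)` is `P(J)` for the Lagrange basis polynomial `P`
of the fiber of `β` through `T`, with nodes `c`. Since `J` acts on `e S` as the scalar `c S`,
`P(J)` acts on `e S` as `P(c S)`, which on the fiber is `1` at `S = T` and `0` elsewhere.
-/

open Polynomial Finset

theorem Polynomial.aeval_mul_of_mul_eq_smul {k X : Type*} [CommSemiring k] [Semiring X]
    [Algebra k X] {J x : X} {a : k} (hx : J * x = a • x) (p : k[X]) :
    aeval J p * x = p.eval a • x := by
  induction p using Polynomial.induction_on with
  | C r => simp [Algebra.smul_def]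
  | add p q hp hq => simp [add_mul, add_smul, hp, hq]
  | monomial n r ih =>
    rw [pow_succ, ← mul_assoc, map_mul, aeval_X, mul_assoc, hx, mul_smul_comm, ih, smul_smul,
      eval_mul_X, mul_comm]

theorem Lagrange.aeval_basis {k X ι : Type*} [Field k] [CommRing X] [Algebra k X]
    [DecidableEq ι] (s : Finset ι) (v : ι → k) (i : ι) (J : X) :
    aeval J (Lagrange.basis s v i) = ∏ j ∈ s.erase i, (v i - v j)⁻¹ • (J - v j • 1) := by
  simp [Lagrange.basis, Lagrange.basisDivisor, map_prod, Algebra.smul_def]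

theorem stmt_8_general {k : Type*} [Field k] {X : Type*} [CommRing X] [Algebra k X]
    {I : Type*} [Fintype I] [DecidableEq I] {I' : Type*} [DecidableEq I']
    (e : I → X)
    (β : I → I') (J : X) (c : I → k)
    (hJ : ∀ T : I, J * e T = c T • e T)
    (hsep : ∀ T T' : I, T ≠ T' → β T = β T' → c T ≠ c T')
    (T : I) :
    e T = (∑ T' ∈ Finset.univ.filter fun T' : I => β T' = β T, e T') *
        ∏ T' ∈ Finset.univ.filter fun T' : I => T' ≠ T ∧ β T' = β T,
          (c T - c T')⁻¹ • (J - c T' • (1 : X)) := by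
  set fiber := univ.filter fun T' : I => β T' = β T
  have hfiber : (univ.filter fun T' : I => T' ≠ T ∧ β T' = β T) = fiber.erase T := by
    ext; simp [fiber]
  have hinj : Set.InjOn c fiber := fun S hS S' hS' hc => by
    by_contra hne
    exact hsep S S' hne ((mem_filter.1 hS).2.trans (mem_filter.1 hS').2.symm) hc
  have hT : T ∈ fiber := by simp [fiber]
  rw [hfiber, ← Lagrange.aeval_basis, sum_mul, sum_eq_single_of_mem T hT]
  · rw [mul_comm, aeval_mul_of_mul_eq_smul (hJ T), Lagrange.eval_basis_self hinj hT, one_smul]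
  · intro S hS hST
    rw [mul_comm, aeval_mul_of_mul_eq_smul (hJ S), Lagrange.eval_basis_of_ne (Ne.symm hST) hS,
      zero_smul]

/-- The recursion `e_T = f_{β(T)} · P_T(J)`: with `f S = ∑_{β T = S} e T`,
`J * e T = c T • e T`, and `c` separating on fibers of `β`, one has
`e T = f (β T) * ∏_{T' ≠ T, β T' = β T} (c T − c T')⁻¹ • (J − c T' • 1)`. -/
theorem stmt_8 {k : Type*} [Field k] {X : Type*} [CommRing X] [Algebra k X]
    {I : Type*} [Fintype I] [DecidableEq I] {I' : Type*} [DecidableEq I']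
    (e : I → X)
    (horth : ∀ T T' : I, T ≠ T' → e T * e T' = 0)
    (hidem : ∀ T : I, e T * e T = e T)
    (hsum : ∑ T : I, e T = 1)
    (β : I → I') (J : X) (c : I → k)
    (hJ : ∀ T : I, J * e T = c T • e T)
    (hsep : ∀ T T' : I, T ≠ T' → β T = β T' → c T ≠ c T')
    (T : I) :
    e T = (∑ T' ∈ Finset.univ.filter fun T' : I => β T' = β T, e T') *
        ∏ T' ∈ Finset.univ.filter fun T' : I => T' ≠ T ∧ β T' = β T,
          (c T - c T')⁻¹ • (J - c T' • (1 : X)) :=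
  stmt_8_general e β J c hJ hsep T
end

section
/- Let k be a field, X a commutative k-algebra, I and I₀ finite sets, Λ and M sets, and let β : I → I₀, τ : I → Λ, τ₀ : I₀ → M be maps, and γ : Λ × M → k a function. Let (e_T)_{T∈I} be a family of pairwise orthogonal idempotents in X summing to 1, and let J ∈ X satisfy J·e_T = γ(τ(T), τ₀(β(T)))·e_T for all T ∈ I. For μ ∈ M define succ(μ) = {λ ∈ Λ : ∃ T ∈ I, τ(T) = λ and τ₀(β(T)) = μ}, and for λ ∈ Λ define pred(λ) = {μ ∈ M : ∃ T ∈ I, τ(T) = λ and τ₀(β(T)) = μ}. Assume: (i) (branching) for every S in the image of β and every λ ∈ succ(τ₀(S)), there is exactly one T ∈ I with β(T) = S and τ(T) = λ; (ii) (separation) for every μ ∈ M and all distinct λ, λ' ∈ succ(μ), γ(λ, μ) ≠ γ(λ', μ). Then for every λ in the image of τ: Σ_{T∈I, τ(T)=λ} e_T = Σ_{μ ∈ pred(λ)} P^λ_μ(J) · (Σ_{U∈I, τ₀(β(U))=μ} e_U), where P^λ_μ(J) = Π_{λ' ∈ succ(μ), λ' ≠ λ} (γ(λ, μ) − γ(λ',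 μ))⁻¹·(J − γ(λ', μ)·1). -/
/-- The recursion for "central" idempotents: with
`J * e T = γ (τ T) (τ₀ (β T)) • e T`, branching uniqueness and separation of contents,
for every `l` in the image of `τ`,
`∑_{τ T = l} e T = ∑_{m ∈ pred l} P^l_m(J) * (∑_{τ₀ (β U) = m} e U)`, where
`P^l_m(J) = ∏_{l' ∈ succ m, l' ≠ l} (γ l m − γ l' m)⁻¹ • (J − γ l' m • 1)`. -/
theorem stmt_9 {k : Type*} [Field k] {X : Type*} [CommRing X] [Algebra k X]
    {I I₀ Λ M : Type*} [Fintype I] [Fintype I₀]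
    [DecidableEq I] [DecidableEq I₀] [DecidableEq Λ] [DecidableEq M]
    (β : I → I₀) (τ : I → Λ) (τ₀ : I₀ → M) (γ : Λ → M → k)
    (e : I → X)
    (horth : ∀ T T' : I, T ≠ T' → e T * e T' = 0)
    (hidem : ∀ T : I, e T * e T = e T)
    (hsum : ∑ T : I, e T = 1)
    (J : X)
    (hJ : ∀ T : I, J * e T = γ (τ T) (τ₀ (β T)) • e T)
    (hbranch : ∀ S : I₀, S ∈ Set.range β →
      ∀ l ∈ Finset.image τ (Finset.univ.filter fun T : I => τ₀ (β T) = τ₀ S),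
        ∃! T : I, β T = S ∧ τ T = l)
    (hsep : ∀ (m : M) (l l' : Λ),
      l ∈ Finset.image τ (Finset.univ.filter fun T : I => τ₀ (β T) = m) →
      l' ∈ Finset.image τ (Finset.univ.filter fun T : I => τ₀ (β T) = m) →
      l ≠ l' → γ l m ≠ γ l' m) :
    ∀ l ∈ Set.range τ,
      ∑ T ∈ Finset.univ.filter (fun T : I => τ T = l), e T =
      ∑ m ∈ Finset.image (fun T : I => τ₀ (β T)) (Finset.univ.filter fun T : I => τ T = l),
        (∏ l' ∈ (Finset.image τ (Finset.univ.filter fun T : I => τ₀ (β T) = m)).erase l,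
            (γ l m - γ l' m)⁻¹ • (J - γ l' m • (1 : X))) *
          ∑ U ∈ Finset.univ.filter (fun U : I => τ₀ (β U) = m), e U := by
  intro l hl
  have key : ∀ m : M,
      (∏ l' ∈ (Finset.image τ (Finset.univ.filter fun T : I => τ₀ (β T) = m)).erase l,
          (γ l m - γ l' m)⁻¹ • (J - γ l' m • (1 : X))) *
        ∑ U ∈ Finset.univ.filter (fun U : I => τ₀ (β U) = m), e U
      = ∑ U ∈ Finset.univ.filter (fun U : I => τ₀ (β U) = m ∧ τ U = l), e U := by
    intro m
    rw [Finset.mul_sum]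
    have hterm : ∀ U ∈ Finset.univ.filter (fun U : I => τ₀ (β U) = m),
        (∏ l' ∈ (Finset.image τ (Finset.univ.filter fun T : I => τ₀ (β T) = m)).erase l,
            (γ l m - γ l' m)⁻¹ • (J - γ l' m • (1 : X))) * e U
        = if τ U = l then e U else 0 := by
      intro U hU
      simp only [Finset.mem_filter, Finset.mem_univ, true_and] at hU
      have hJU : J * e U = γ (τ U) m • e U := by rw [hJ U, hU]
      have hτU : τ U ∈ Finset.image τ (Finset.univ.filter fun T : I => τ₀ (β T) = m) := by
        exact Finset.mem_image.mpr ⟨U, by simp [hU], rfl⟩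
      have heig : ∀ s : Finset Λ,
          (∏ l' ∈ s, (γ l m - γ l' m)⁻¹ • (J - γ l' m • (1 : X))) * e U
          = (∏ l' ∈ s, (γ l m - γ l' m)⁻¹ * (γ (τ U) m - γ l' m)) • e U := by
        intro s
        induction s using Finset.induction_on with
        | empty => simp
        | @insert a s ha ih =>
          rw [Finset.prod_insert ha, Finset.prod_insert ha, mul_assoc, ih,
            smul_mul_smul_comm, sub_mul, smul_mul_assoc, one_mul, hJU, ← sub_smul, smul_smul]
          congr 1
          ring
      rw [heig]
      by_cases h : τ U = l
      · rw [h, if_pos rfl]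
        have : ∀ l' ∈ (Finset.image τ (Finset.univ.filter fun T : I => τ₀ (β T) = m)).erase l,
            (γ l m - γ l' m)⁻¹ * (γ l m - γ l' m) = 1 := by
          intro l' hl'
          rw [Finset.mem_erase] at hl'
          have hne : γ l m ≠ γ l' m := hsep m l l' (h ▸ hτU) hl'.2 (Ne.symm hl'.1)
          exact inv_mul_cancel₀ (sub_ne_zero.mpr hne)
        rw [Finset.prod_congr rfl this, Finset.prod_const_one, one_smul]
      · rw [if_neg h]
        have hmem : τ U ∈ (Finset.image τ (Finset.univ.filter fun T : I => τ₀ (β T) = m)).erase l :=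
          Finset.mem_erase.mpr ⟨h, hτU⟩
        rw [Finset.prod_eq_zero hmem (by rw [sub_self, mul_zero]), zero_smul]
    rw [Finset.sum_congr rfl hterm, ← Finset.sum_filter, Finset.filter_filter]
  rw [Finset.sum_congr rfl fun m _ => key m]
  rw [← Finset.sum_fiberwise_of_maps_to (g := fun T : I => τ₀ (β T))
    (t := Finset.image (fun T : I => τ₀ (β T)) (Finset.univ.filter fun T : I => τ T = l))
    (fun T hT => Finset.mem_image_of_mem _ hT) e]
  refine Finset.sum_congr rfl fun m _ => Finset.sum_congr ?_ fun _ _ => rfl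
  rw [Finset.filter_filter]
  exact Finset.filter_congr fun T _ => by tauto
end

section
/- Let k be a field of characteristic zero, n a positive natural number, and λ a Young diagram with n cells. Let T : Fin n ≃ λ.cells be a bijective filling of λ. In the group algebra k[S_n] of the symmetric group S_n = Equiv.Perm (Fin n), let R(T) = {w ∈ S_n : for all i, T(w(i)) lies in the same row as T(i)} and C(T) = {w ∈ S_n : for all i, T(w(i)) lies in the same column as T(i)} be the row and column stabilizer subgroups, and set a_T = Σ_{w∈R(T)} w and b_T = Σ_{w∈C(T)} sgn(w)·w. Let z_n = Σ_{σ∈S_n, σ a transposition} σ be the sum of all transpositions. Then (a_T · b_T) · z_n = (ξ(λ) − ξ(λ'))·(a_T · b_T), where λ' is the transpose (conjugate) of λ and ξ(μ) = Σ_i binom(μ_i, 2) is the sum over the rows of μ of the binomial coefficient 'row length choose 2'. -/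
open scoped Classical

/-- The formal sum `a_T = ∑_{w ∈ R(T)} w` over the row stabilizer of the filling `T`,
in the group algebra of `S_n`. -/
noncomputable def rowSym (k : Type*) [Field k] {n : ℕ} (Y : YoungDiagram)
    (T : Fin n ≃ Y.cells) : MonoidAlgebra k (Equiv.Perm (Fin n)) :=
  ∑ w ∈ Finset.univ.filter
      (fun w : Equiv.Perm (Fin n) => ∀ i : Fin n, (T (w i)).val.1 = (T i).val.1),
    MonoidAlgebra.single w 1

/-- The signed formal sum `b_T = ∑_{w ∈ C(T)} sgn(w)·w` over the column stabilizer of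
the filling `T`, in the group algebra of `S_n`. -/
noncomputable def colSym (k : Type*) [Field k] {n : ℕ} (Y : YoungDiagram)
    (T : Fin n ≃ Y.cells) : MonoidAlgebra k (Equiv.Perm (Fin n)) :=
  ∑ w ∈ Finset.univ.filter
      (fun w : Equiv.Perm (Fin n) => ∀ i : Fin n, (T (w i)).val.2 = (T i).val.2),
    MonoidAlgebra.single w ((Equiv.Perm.sign w : ℤ) : k)

/-- The sum `z_n` of all transpositions of `S_n` in the group algebra. -/
noncomputable def transpositionSum (k : Type*) [Field k] (n : ℕ) :
    MonoidAlgebra k (Equiv.Perm (Fin n)) :=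
  ∑ w ∈ Finset.univ.filter (fun w : Equiv.Perm (Fin n) => w.IsSwap),
    MonoidAlgebra.single w 1

/-- `ξ(Y) = ∑_i binom(rowLen Y i, 2)`, summed over the rows of `Y`. -/
def xi (Y : YoungDiagram) : ℕ :=
  ∑ i ∈ Finset.range (Y.colLen 0), (Y.rowLen i).choose 2

/-!
Since `z_n` is a sum over a conjugacy class it is central, so
`a_T b_T z_n = ∑_τ a_T τ b_T` over the transpositions `τ`. A transposition inside a row is
absorbed by `a_T` and one inside a column by `b_T` with sign `-1`, contributing `a_T b_T` and
`-a_T b_T`; there are `ξ(λ)` and `ξ(λ')` of them. Every other `τ = (x y)` contributes `0`: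
if `x` lies in a higher row than `y`, the cell `z` in the row of `x` and the column of `y` gives a
row transposition `(x z)` and a column transposition `(y z)` with `(x z)(x y) = (x y)(y z)`,
whence `a_T τ b_T = a_T (x z) τ b_T = a_T τ (y z) b_T = -a_T τ b_T`.
-/

open Finset Equiv MonoidAlgebra

section Permutations

variable {α β : Type*}

lemma forall_mul_right_apply_eq_iff {f : α → β} {σ : Perm α} (hσ : ∀ i, f (σ i) = f i)
    (u : Perm α) : (∀ i, f ((u * σ) i) = f i) ↔ ∀ i, f (u i) = f i :=
  calc (∀ i, f (u (σ i)) = f i) ↔ ∀ i, f (u (σ i)) = f (σ i) := by simp only [hσ]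
    _ ↔ ∀ i, f (u i) = f i := σ.forall_congr_right (q := fun j => f (u j) = f j)

lemma forall_mul_left_apply_eq_iff {f : α → β} {σ : Perm α} (hσ : ∀ i, f (σ i) = f i)
    (u : Perm α) : (∀ i, f ((σ * u) i) = f i) ↔ ∀ i, f (u i) = f i := by
  simp only [Perm.mul_apply, hσ]

variable [DecidableEq α]

lemma forall_swap_apply_eq_iff (f : α → β) {a b : α} :
    (∀ i, f (swap a b i) = f i) ↔ f a = f b := by
  refine ⟨fun h => by simpa using (h a).symm, fun h i => ?_⟩
  rcases eq_or_ne i a with rfl | hia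
  · rw [swap_apply_left, h]
  rcases eq_or_ne i b with rfl | hib
  · rw [swap_apply_right, h]
  · rw [swap_apply_of_ne_of_ne hia hib]

lemma Equiv.Perm.IsSwap.conj {τ : Perm α} (hτ : τ.IsSwap) (g : Perm α) :
    (g * τ * g⁻¹).IsSwap := by
  obtain ⟨a, b, hab, rfl⟩ := hτ
  exact ⟨g a, g b, g.injective.ne hab, (swap_apply_apply g a b).symm⟩

variable [Fintype α]

lemma Equiv.Perm.IsSwap.eq_of_support_eq {σ τ : Perm α} (hσ : σ.IsSwap) (hτ : τ.IsSwap)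
    (h : σ.support = τ.support) : σ = τ := by
  obtain ⟨a, b, hab, rfl⟩ := hσ
  obtain ⟨c, d, hcd, rfl⟩ := hτ
  rw [Perm.support_swap hab, Perm.support_swap hcd] at h
  have ha : a ∈ ({c, d} : Finset α) := h ▸ mem_insert_self a {b}
  have hb : b ∈ ({c, d} : Finset α) := h ▸ mem_insert_of_mem (mem_singleton_self b)
  simp only [mem_insert, mem_singleton] at ha hb
  rcases ha with rfl | rfl <;> rcases hb with rfl | rfl
  all_goals first | exact absurd rfl hab | rfl | exact swap_comm _ _

/-- A transposition preserving `f` is determined by its support, a pair inside one fibre of `f`. -/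
theorem card_isSwap_preserving [DecidableEq β] (f : α → β) (t : Finset β)
    (ht : ∀ a, f a ∈ t) :
    #{w : Perm α | w.IsSwap ∧ ∀ i, f (w i) = f i} = ∑ v ∈ t, (#{a | f a = v}).choose 2 := by
  simp_rw [← card_powersetCard]
  rw [← card_biUnion]
  · refine card_bij (fun w _ => w.support) ?_ ?_ ?_
    · simp only [mem_filter, mem_univ, true_and, mem_biUnion, mem_powersetCard]
      rintro w ⟨⟨a, b, hab, rfl⟩, hw⟩
      refine ⟨f a, ht a, ?_, Perm.card_support_eq_two.2 ⟨a, b, hab, rfl⟩⟩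
      rw [Perm.support_swap hab]
      intro c hc
      have hfab := (forall_swap_apply_eq_iff f).1 hw
      simp only [mem_insert, mem_singleton] at hc
      rcases hc with rfl | rfl <;> simp [hfab]
    · intro σ hσ τ hτ h
      exact (mem_filter.1 hσ).2.1.eq_of_support_eq (mem_filter.1 hτ).2.1 h
    · simp only [mem_biUnion, mem_powersetCard, mem_filter, mem_univ, true_and]
      rintro s ⟨v, -, hsub, hs⟩
      obtain ⟨a, b, hab, rfl⟩ := card_eq_two.1 hs
      have ha : f a = v := by simpa using hsub (mem_insert_self a {b})
      have hb : f b = v := by simpa using hsub (mem_insert_of_mem (mem_singleton_self b))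
      exact ⟨swap a b, ⟨⟨a, b, hab, rfl⟩, (forall_swap_apply_eq_iff f).2 (ha.trans hb.symm)⟩,
        Perm.support_swap hab⟩
  · intro v _ v' _ hvv'
    refine disjoint_left.2 fun s hs hs' => ?_
    rw [mem_powersetCard] at hs hs'
    obtain ⟨a, ha⟩ : s.Nonempty := card_pos.1 (by omega)
    exact hvv' ((mem_filter.1 (hs.1 ha)).2.symm.trans (mem_filter.1 (hs'.1 ha)).2)

end Permutations

lemma card_filter_equiv_finset {α γ : Type*} [Fintype α] {s : Finset γ} (e : α ≃ s)
    (p : γ → Prop) [DecidablePred p] : #{a | p (e a)} = #(s.filter p) :=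
  card_bij' (fun a _ => (e a).val) (fun c hc => e.symm ⟨c, (mem_filter.1 hc).1⟩)
    (by simp) (by simp) (by simp) (by simp)

section TranspositionSum

variable {k : Type*} [Field k] {n : ℕ}

lemma commute_single_transpositionSum (g : Perm (Fin n)) :
    Commute (single g (1 : k)) (transpositionSum k n) := by
  simp only [Commute, SemiconjBy, transpositionSum, mul_sum, sum_mul, single_mul_single, mul_one]
  refine sum_equiv (MulAut.conj g).toEquiv (fun τ => ?_) (fun τ _ => ?_)
  · simpa using ⟨fun h => h.conj g, fun h => by simpa [mul_assoc] using h.conj g⁻¹⟩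
  · simp [mul_assoc]

lemma commute_transpositionSum (x : MonoidAlgebra k (Perm (Fin n))) :
    Commute x (transpositionSum k n) := by
  induction x using MonoidAlgebra.induction_on with
  | of g => exact commute_single_transpositionSum g
  | add x y hx hy => exact hx.add_left hy
  | smul r x hx => exact hx.smul_left r

end TranspositionSum

section Filling

variable {k : Type*} [Field k] {n : ℕ} {Y : YoungDiagram} (T : Fin n ≃ Y.cells)

lemma rowSym_mul_single {σ : Perm (Fin n)} (hσ : ∀ i, (T (σ i)).val.1 = (T i).val.1) :
    rowSym k Y T * single σ 1 = rowSym k Y T := by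
  simp only [rowSym, sum_mul, single_mul_single, mul_one]
  refine sum_equiv (Equiv.mulRight σ) (fun u => ?_) (fun _ _ => rfl)
  simpa using (forall_mul_right_apply_eq_iff (f := fun i => (T i).val.1) hσ u).symm

lemma single_sign_mul_colSym {σ : Perm (Fin n)} (hσ : ∀ i, (T (σ i)).val.2 = (T i).val.2) :
    single σ ((Perm.sign σ : ℤ) : k) * colSym k Y T = colSym k Y T := by
  simp only [colSym, mul_sum, single_mul_single]
  refine sum_equiv (Equiv.mulLeft σ) (fun u => ?_) (fun u _ => by simp)
  simpa using (forall_mul_left_apply_eq_iff (f := fun i => (T i).val.2) hσ u).symm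

lemma single_swap_mul_colSym {x y : Fin n} (hxy : x ≠ y) (hcol : (T x).val.2 = (T y).val.2) :
    single (swap x y) (1 : k) * colSym k Y T = -colSym k Y T := by
  have h := single_sign_mul_colSym (k := k) T
    ((forall_swap_apply_eq_iff (fun i => (T i).val.2)).2 hcol)
  rw [Perm.sign_swap hxy, Units.val_neg, Units.val_one, Int.cast_neg, Int.cast_one,
    single_neg, neg_mul] at h
  exact neg_eq_iff_eq_neg.1 h

lemma rowSym_mul_single_swap_mul_colSym_of_lt [NeZero (2 : k)] {x y : Fin n}
    (hrow : (T x).val.1 < (T y).val.1) (hcol : (T x).val.2 ≠ (T y).val.2) :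
    rowSym k Y T * single (swap x y) 1 * colSym k Y T = 0 := by
  have hcorner : ((T x).val.1, (T y).val.2) ∈ Y.cells := Y.up_left_mem hrow.le le_rfl (T y).2
  obtain ⟨z, hz⟩ : ∃ z, (T z).val = ((T x).val.1, (T y).val.2) :=
    ⟨T.symm ⟨_, hcorner⟩, by simp⟩
  have hzx : z ≠ x := fun h => hcol (by rw [← h, hz])
  have hzy : z ≠ y := fun h => hrow.ne' (by rw [← h, hz])
  have hxz : (T x).val.1 = (T z).val.1 := by simp [hz]
  have hyz : (T y).val.2 = (T z).val.2 := by simp [hz]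
  have hconj : swap x z * swap x y = swap x y * swap y z := by
    have h := swap_apply_apply (swap x y) y z
    rw [swap_apply_right, swap_apply_of_ne_of_ne hzx hzy, swap_inv] at h
    rw [h, mul_assoc, swap_mul_self, mul_one]
  set M := rowSym k Y T * single (swap x y) 1 * colSym k Y T
  have hM : M = -M :=
    calc M = rowSym k Y T * single (swap x z) 1 * single (swap x y) 1 * colSym k Y T := by
          rw [rowSym_mul_single T ((forall_swap_apply_eq_iff (fun i => (T i).val.1)).2 hxz)]
      _ = rowSym k Y T * single (swap x y) 1 * (single (swap y z) 1 * colSym k Y T) := by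
          rw [mul_assoc (rowSym k Y T), single_mul_single, hconj, ← single_mul_single]
          simp only [mul_assoc]
      _ = -M := by rw [single_swap_mul_colSym T hzy.symm hyz, mul_neg]
  have h2M : (2 : k) • M = 0 := by rw [two_smul]; nth_rewrite 1 [hM]; exact neg_add_cancel M
  exact (smul_eq_zero.1 h2M).resolve_left two_ne_zero

lemma rowSym_mul_single_mul_colSym_of_isSwap [NeZero (2 : k)] {τ : Perm (Fin n)}
    (hτ : τ.IsSwap) :
    rowSym k Y T * single τ 1 * colSym k Y T =
      ((if ∀ i, (T (τ i)).val.1 = (T i).val.1 then 1 else 0) -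
        (if ∀ i, (T (τ i)).val.2 = (T i).val.2 then 1 else 0) : k) •
        (rowSym k Y T * colSym k Y T) := by
  obtain ⟨x, y, hxy, rfl⟩ := hτ
  simp only [forall_swap_apply_eq_iff (fun i => (T i).val.1),
    forall_swap_apply_eq_iff (fun i => (T i).val.2)]
  by_cases hrow : (T x).val.1 = (T y).val.1
  · have hcol : (T x).val.2 ≠ (T y).val.2 := fun hcol =>
      hxy (T.injective (Subtype.ext (Prod.ext hrow hcol)))
    rw [rowSym_mul_single T ((forall_swap_apply_eq_iff (fun i => (T i).val.1)).2 hrow),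
      if_pos hrow, if_neg hcol, sub_zero, one_smul]
  by_cases hcol : (T x).val.2 = (T y).val.2
  · rw [mul_assoc, single_swap_mul_colSym T hxy hcol, if_neg hrow, if_pos hcol]
    simp
  rw [if_neg hrow, if_neg hcol, sub_zero, zero_smul]
  rcases lt_or_gt_of_ne hrow with hlt | hgt
  · exact rowSym_mul_single_swap_mul_colSym_of_lt T hlt hcol
  · rw [swap_comm]
    exact rowSym_mul_single_swap_mul_colSym_of_lt T hgt (Ne.symm hcol)

lemma card_isSwap_preserving_row :
    #{w : Perm (Fin n) | w.IsSwap ∧ ∀ i, (T (w i)).val.1 = (T i).val.1} = xi Y := by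
  rw [xi]
  convert card_isSwap_preserving (fun i => (T i).val.1) (range (Y.colLen 0))
    (fun i => mem_range.2 (Y.mem_iff_lt_colLen.1 (Y.up_left_mem le_rfl (Nat.zero_le _) (T i).2)))
    using 1
  -- the two sides use different decidability instances for `∀ i : Fin n, _`
  · congr
  refine sum_congr rfl fun v _ => congrArg (Nat.choose · 2) ?_
  rw [card_filter_equiv_finset T (fun c => c.1 = v), Y.rowLen_eq_card]
  rfl

lemma card_isSwap_preserving_col :
    #{w : Perm (Fin n) | w.IsSwap ∧ ∀ i, (T (w i)).val.2 = (T i).val.2} = xi Y.transpose := by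
  rw [xi, YoungDiagram.colLen_transpose]
  convert card_isSwap_preserving (fun i => (T i).val.2) (range (Y.rowLen 0))
    (fun i => mem_range.2 (Y.mem_iff_lt_rowLen.1 (Y.up_left_mem (Nat.zero_le _) le_rfl (T i).2)))
    using 1
  · congr
  refine sum_congr rfl fun v _ => congrArg (Nat.choose · 2) ?_
  rw [card_filter_equiv_finset T (fun c => c.2 = v), YoungDiagram.rowLen_transpose,
    Y.colLen_eq_card]
  rfl

end Filling

theorem stmt_10_general {k : Type*} [Field k] [CharZero k] {n : ℕ}
    (Y : YoungDiagram) (T : Fin n ≃ Y.cells) :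
    rowSym k Y T * colSym k Y T * transpositionSum k n =
      (((xi Y : ℤ) - (xi Y.transpose : ℤ) : ℤ) : k) • (rowSym k Y T * colSym k Y T) := by
  set a := rowSym k Y T
  set b := colSym k Y T
  calc a * b * transpositionSum k n = a * transpositionSum k n * b := by
        rw [mul_assoc, (commute_transpositionSum b).eq, mul_assoc]
    _ = ∑ τ ∈ univ.filter (fun w : Perm (Fin n) => w.IsSwap), a * single τ 1 * b := by
        rw [transpositionSum, mul_sum, sum_mul]
    _ = ∑ τ ∈ univ.filter (fun w : Perm (Fin n) => w.IsSwap),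
          ((if ∀ i, (T (τ i)).val.1 = (T i).val.1 then 1 else 0) -
            (if ∀ i, (T (τ i)).val.2 = (T i).val.2 then 1 else 0) : k) • (a * b) :=
        sum_congr rfl fun τ hτ => rowSym_mul_single_mul_colSym_of_isSwap T (mem_filter.1 hτ).2
    _ = ((xi Y : k) - xi Y.transpose) • (a * b) := by
        rw [← sum_smul, sum_sub_distrib, sum_boole, sum_boole, filter_filter, filter_filter,
          card_isSwap_preserving_row, card_isSwap_preserving_col]
    _ = _ := by push_cast; rfl

/-- For a bijective filling `T` of a Young diagram `Y` with `n` cells,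
the Young symmetrizer `a_T · b_T` satisfies
`(a_T · b_T) · z_n = (ξ(Y) − ξ(Yᵀ)) · (a_T · b_T)` in `k[S_n]`, `char k = 0`. -/
theorem stmt_10 {k : Type*} [Field k] [CharZero k] {n : ℕ} (hn : 0 < n)
    (Y : YoungDiagram) (hY : Y.card = n) (T : Fin n ≃ Y.cells) :
    rowSym k Y T * colSym k Y T * transpositionSum k n =
      (((xi Y : ℤ) - (xi Y.transpose : ℤ) : ℤ) : k) • (rowSym k Y T * colSym k Y T) :=
  stmt_10_general Y T
end
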